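/- Fix α > 0 and r ≥ 0. Let (β_t)_{t≥0} be an (F_t)-Brownian motion started from 0 on a filtered probability space, and suppose (R¹_t)_{t≥0} and (R²_t)_{t≥0} are two continuous nonnegative (F_t)-adapted processes, each satisfying: R^i_0 = r, R^i_t = r + β_t − α∫₀^t (R^i_s)^{−1} ds for all 0 ≤ t ≤ T^i := inf{t ≥ 0 : R^i_t = 0}, and R^i_t = 0 for all t ≥ T^i. Then almost surely R¹_t = R²_t for all t ≥ 0 (pathwise uniqueness for the absorbed Bessel stochastic differential equation dR = dβ − (α/R) dt). -/

import Mathlib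

open MeasureTheory ProbabilityTheory Filter Set
open scoped NNReal ENNReal

noncomputable section

/-- The first hitting time of the level `c` by the path `t ↦ X t ω`, with values in
`ℝ≥0∞` (`∞` if the level is never hit). -/
def hitTimeE {Ω : Type*} (X : ℝ≥0 → Ω → ℝ) (c : ℝ) (ω : Ω) : ℝ≥0∞ :=
  sInf {t : ℝ≥0∞ | ∃ s : ℝ≥0, (s : ℝ≥0∞) = t ∧ X s ω = c}

/-- The path `t ↦ X t ω` stopped at the (possibly infinite) time `T ω`. -/
def stopE {Ω : Type*} (X : ℝ≥0 → Ω → ℝ) (T : Ω → ℝ≥0∞) (ω : Ω) : ℝ≥0 → ℝ :=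
  fun t => X ((min (t : ℝ≥0∞) (T ω)).toNNReal) ω

/-- The time integral `∫₀ᵗ g(X_s) ds` along the path `t ↦ X t ω`. -/
def pInt {Ω : Type*} (X : ℝ≥0 → Ω → ℝ) (g : ℝ → ℝ) (t : ℝ≥0) (ω : Ω) : ℝ :=
  ∫ s in (0:ℝ)..(t:ℝ), g (X s.toNNReal ω)

/-- The time integral `∫₀^{T ω} g(X_s) ds` along the path `t ↦ X t ω`, as an
`ℝ≥0∞`-valued integral; the upper limit `T ω` may be infinite. -/
def upIntE {Ω : Type*} (X : ℝ≥0 → Ω → ℝ) (g : ℝ → ℝ) (T : Ω → ℝ≥0∞) (ω : Ω) : ℝ≥0∞ :=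
  ∫⁻ t in {t : ℝ | 0 ≤ t ∧ ENNReal.ofReal t ≤ T ω}, ENNReal.ofReal (g (X t.toNNReal ω))

/-- `exp (-x)` for `x ∈ [0,∞]`, with the convention `exp (-∞) = 0`. -/
def expNeg (x : ℝ≥0∞) : ℝ := if x = ⊤ then 0 else Real.exp (-x.toReal)

/-- `exp (-x)` for `x ∈ [0,∞]`, as an element of `ℝ≥0∞`. -/
def expNegE (x : ℝ≥0∞) : ℝ≥0∞ := ENNReal.ofReal (expNeg x)

/-- A standard one-dimensional Brownian motion `B` started from `r` under `P`:
a continuous process with `B 0 = r` whose increments are independent centered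
Gaussians with variance the time increment. -/
structure IsBrownianMotion {Ω : Type*} [MeasurableSpace Ω]
    (P : Measure Ω) (B : ℝ≥0 → Ω → ℝ) (r : ℝ) : Prop where
  isProb : IsProbabilityMeasure P
  meas : ∀ t, Measurable (B t)
  init : ∀ ω, B 0 ω = r
  cont : ∀ ω, Continuous fun t => B t ω
  gauss : ∀ s t : ℝ≥0, s ≤ t →
    P.map (fun ω => B t ω - B s ω) = gaussianReal 0 (t - s)
  indep : ∀ (n : ℕ) (u : Fin (n + 1) → ℝ≥0), Monotone u →
    iIndepFun
      (fun i : Fin n => fun ω => B (u i.succ) ω - B (u i.castSucc) ω) P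

/-- An `(F_t)`-Brownian motion started from `r`: a Brownian motion adapted to `F`
whose increments after time `s` are independent of `F s`. -/
structure IsBMFiltered {Ω : Type*} {mΩ : MeasurableSpace Ω}
    (P : Measure Ω) (F : Filtration ℝ≥0 mΩ) (B : ℝ≥0 → Ω → ℝ) (r : ℝ) : Prop where
  toBM : IsBrownianMotion P B r
  adapted : Adapted F B
  indepPast : ∀ s t : ℝ≥0, s ≤ t →
    Indep (MeasurableSpace.comap (fun ω => B t ω - B s ω) (borel ℝ)) (F s) P

/-- A Bessel process of dimension `1 - 2 * α` started from `r`, absorbed at `0`,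
driven by the `(F_t)`-Brownian motion `β` (with `β 0 = 0`): a continuous nonnegative
adapted process `R` with `R 0 = r` satisfying
`R t = r + β t - α * ∫₀ᵗ (R s)⁻¹ ds` for all `0 ≤ t ≤ T := inf {t | R t = 0}`
(encoded by the condition `∀ s < t, R s ≠ 0`), and `R t = 0` for `t ≥ T`
(encoded by: `0` is absorbing). -/
structure IsBesselF {Ω : Type*} {mΩ : MeasurableSpace Ω}
    (P : Measure Ω) (F : Filtration ℝ≥0 mΩ) (β : ℝ≥0 → Ω → ℝ)
    (α r : ℝ) (R : ℝ≥0 → Ω → ℝ) : Prop where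
  bm : IsBMFiltered P F β 0
  adapted : Adapted F R
  cont : ∀ ω, Continuous fun t => R t ω
  nonneg : ∀ ω, ∀ t, 0 ≤ R t ω
  init : ∀ ω, R 0 ω = r
  sde : ∀ ω, ∀ t : ℝ≥0, (∀ s, s < t → R s ω ≠ 0) →
    R t ω = r + β t ω - α * pInt R (fun x => x⁻¹) t ω
  absorbed : ∀ ω, ∀ s t : ℝ≥0, s ≤ t → R s ω = 0 → R t ω = 0

/-- A Bessel process of dimension `1 - 2 * α` started from `r`, absorbed at `0`:
there exist a filtration and a driving Brownian motion as in `IsBesselF`. -/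
def IsBessel {Ω : Type*} [mΩ : MeasurableSpace Ω] (P : Measure Ω)
    (α r : ℝ) (R : ℝ≥0 → Ω → ℝ) : Prop :=
  ∃ (F : Filtration ℝ≥0 mΩ) (β : ℝ≥0 → Ω → ℝ), IsBesselF P F β α r R

/-!
The noise is additive, so the difference of two solutions solves an ordinary integral equation
with the drift `x ↦ -α / x`. While both paths stay positive they stay above some `m > 0` on each
compact time interval, where the drift is Lipschitz, and Grönwall's lemma makes them agree. At the
first time one of them vanishes they still agree by continuity, so both vanish there, and
absorption at `0` makes them agree forever after.
-/

section IntegralEquation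

variable {E : Type*} [NormedAddCommGroup E] [NormedSpace ℝ E] [CompleteSpace E]

theorem eqOn_of_integral_eq_of_lipschitzWith {K : ℝ≥0} {φ : E → E} {c f g : ℝ → E} {a b : ℝ}
    (hφ : LipschitzWith K φ) (hf : Continuous f) (hg : Continuous g)
    (hfc : ∀ t ∈ Icc a b, f t = c t + ∫ s in a..t, φ (f s))
    (hgc : ∀ t ∈ Icc a b, g t = c t + ∫ s in a..t, φ (g s)) :
    EqOn f g (Icc a b) := by
  have hφf : Continuous fun s => φ (f s) := hφ.continuous.comp hf
  have hφg : Continuous fun s => φ (g s) := hφ.continuous.comp hg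
  set D : ℝ → E := fun t => ∫ s in a..t, (φ (f s) - φ (g s))
  have hD : ∀ t ∈ Icc a b, D t = f t - g t := fun t ht => by
    change (∫ s in a..t, (φ (f s) - φ (g s))) = _
    rw [intervalIntegral.integral_sub (hφf.intervalIntegrable _ _) (hφg.intervalIntegrable _ _),
      hfc t ht, hgc t ht]
    abel
  have hDderiv : ∀ t, HasDerivAt D (φ (f t) - φ (g t)) t :=
    fun t => ((hφf.sub hφg).integral_hasStrictDerivAt a t).hasDerivAt
  have hD_zero : ∀ t ∈ Icc a b, D t = 0 :=
    eq_zero_of_abs_deriv_le_mul_abs_self_of_eq_zero_right (K := K)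
      (fun t _ => (hDderiv t).continuousAt.continuousWithinAt)
      (fun t _ => (hDderiv t).hasDerivWithinAt) intervalIntegral.integral_same
      fun t ht => by
        rw [hD t (Ico_subset_Icc_self ht)]
        exact hφ.norm_sub_le _ _
  intro t ht
  rw [← sub_eq_zero, ← hD t ht, hD_zero t ht]

end IntegralEquation

theorem lipschitzWith_inv_max {m : ℝ} (hm : 0 < m) :
    LipschitzWith (Real.toNNReal (m ^ 2)⁻¹) fun x : ℝ => (max x m)⁻¹ := by
  refine LipschitzWith.of_dist_le' fun x y => ?_
  have hx : m ≤ max x m := le_max_right x m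
  have hy : m ≤ max y m := le_max_right y m
  have hmax : dist (max x m) (max y m) ≤ dist x y := by
    simpa only [Real.dist_eq] using abs_max_sub_max_le_abs x y m
  rw [Real.dist_eq, inv_sub_inv (hm.trans_le hx).ne' (hm.trans_le hy).ne', abs_div,
    abs_of_pos (mul_pos (hm.trans_le hx) (hm.trans_le hy)), div_eq_inv_mul, abs_sub_comm,
    ← Real.dist_eq]
  exact mul_le_mul (inv_anti₀ (by positivity) (by nlinarith)) hmax dist_nonneg (by positivity)

theorem eqOn_of_eq_sub_integral_inv {α a b : ℝ} {c f g : ℝ → ℝ}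
    (hf : Continuous f) (hg : Continuous g)
    (hfpos : ∀ t ∈ Icc a b, 0 < f t) (hgpos : ∀ t ∈ Icc a b, 0 < g t)
    (hfc : ∀ t ∈ Icc a b, f t = c t - α * ∫ s in a..t, (f s)⁻¹)
    (hgc : ∀ t ∈ Icc a b, g t = c t - α * ∫ s in a..t, (g s)⁻¹) :
    EqOn f g (Icc a b) := by
  obtain ⟨m, hm, hmle⟩ := isCompact_Icc.exists_forall_le' (hf.min hg).continuousOn
    fun t ht => lt_min (hfpos t ht) (hgpos t ht)
  -- Clamping at `m` changes nothing along the paths and makes the drift globally Lipschitz.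
  have hdrift : ∀ h : ℝ → ℝ, (∀ t ∈ Icc a b, m ≤ h t) →
      (∀ t ∈ Icc a b, h t = c t - α * ∫ s in a..t, (h s)⁻¹) →
      ∀ t ∈ Icc a b, h t = c t + ∫ s in a..t, -α • (max (h s) m)⁻¹ := by
    intro h hmh hc t ht
    have hsub : uIcc a t ⊆ Icc a b := by
      rw [uIcc_of_le ht.1]
      exact Icc_subset_Icc_right ht.2
    have hclamp : ∫ s in a..t, (max (h s) m)⁻¹ = ∫ s in a..t, (h s)⁻¹ :=
      intervalIntegral.integral_congr fun s hs => by simp only [max_eq_left (hmh s (hsub hs))]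
    rw [hc t ht, intervalIntegral.integral_smul, smul_eq_mul, hclamp]
    ring
  exact eqOn_of_integral_eq_of_lipschitzWith ((lipschitzWith_smul (-α)).comp
    (lipschitzWith_inv_max hm)) hf hg
    (hdrift f (fun t ht => (hmle t ht).trans (min_le_left _ _)) hfc)
    (hdrift g (fun t ht => (hmle t ht).trans (min_le_right _ _)) hgc)

structure IsBesselPath (b : ℝ≥0 → ℝ) (α r : ℝ) (x : ℝ≥0 → ℝ) : Prop where
  cont : Continuous x
  nonneg : ∀ t, 0 ≤ x t
  init : x 0 = r
  eq_sub_integral : ∀ t : ℝ≥0, (∀ s, s < t → x s ≠ 0) →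
    x t = r + b t - α * ∫ s in (0:ℝ)..(t:ℝ), (x s.toNNReal)⁻¹
  absorbed : ∀ s t : ℝ≥0, s ≤ t → x s = 0 → x t = 0

theorem IsBesselF.isBesselPath {Ω : Type*} {mΩ : MeasurableSpace Ω} {P : Measure Ω}
    {F : Filtration ℝ≥0 mΩ} {β : ℝ≥0 → Ω → ℝ} {α r : ℝ} {R : ℝ≥0 → Ω → ℝ}
    (h : IsBesselF P F β α r R) (ω : Ω) : IsBesselPath (β · ω) α r (R · ω) :=
  ⟨h.cont ω, h.nonneg ω, h.init ω, h.sde ω, h.absorbed ω⟩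

namespace IsBesselPath

variable {b : ℝ≥0 → ℝ} {α r : ℝ} {x y : ℝ≥0 → ℝ}

theorem pos_of_le (hx : IsBesselPath b α r x) {s t : ℝ≥0} (ht : x t ≠ 0) (hst : s ≤ t) :
    0 < x s :=
  (hx.nonneg s).lt_of_ne' fun hs => ht (hx.absorbed s t hst hs)

theorem continuous_comp_toNNReal (hx : IsBesselPath b α r x) :
    Continuous fun u : ℝ => x u.toNNReal :=
  hx.cont.comp continuous_real_toNNReal

theorem eq_sub_integral_of_le (hx : IsBesselPath b α r x) {t : ℝ≥0} (ht : x t ≠ 0) {u : ℝ}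
    (hu : u ∈ Icc 0 (t : ℝ)) :
    x u.toNNReal = r + b u.toNNReal - α * ∫ s in (0:ℝ)..u, (x s.toNNReal)⁻¹ := by
  have hut : u.toNNReal ≤ t := Real.toNNReal_le_iff_le_coe.2 hu.2
  have := hx.eq_sub_integral u.toNNReal fun s hs => (hx.pos_of_le ht (hs.le.trans hut)).ne'
  rwa [Real.coe_toNNReal u hu.1] at this

theorem eq_of_ne_zero (hx : IsBesselPath b α r x) (hy : IsBesselPath b α r y) {t : ℝ≥0}
    (hxt : x t ≠ 0) (hyt : y t ≠ 0) : x t = y t := by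
  have hle : ∀ u ∈ Icc (0:ℝ) t, u.toNNReal ≤ t := fun u hu => Real.toNNReal_le_iff_le_coe.2 hu.2
  have := eqOn_of_eq_sub_integral_inv (c := fun u => r + b u.toNNReal)
    hx.continuous_comp_toNNReal hy.continuous_comp_toNNReal
    (fun u hu => hx.pos_of_le hxt (hle u hu)) (fun u hu => hy.pos_of_le hyt (hle u hu))
    (fun u hu => hx.eq_sub_integral_of_le hxt hu) (fun u hu => hy.eq_sub_integral_of_le hyt hu)
    ⟨t.coe_nonneg, le_rfl⟩
  simpa only [Real.toNNReal_coe] using this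

theorem eq_of_eqOn_Iio (hx : IsBesselPath b α r x) (hy : IsBesselPath b α r y) {τ : ℝ≥0}
    (h : EqOn x y (Iio τ)) : x τ = y τ := by
  rcases eq_or_ne τ 0 with rfl | hτ
  · rw [hx.init, hy.init]
  refine h.of_subset_closure hx.cont.continuousOn hy.cont.continuousOn Iio_subset_Iic_self
    ?_ self_mem_Iic
  rw [closure_Iio' ⟨0, pos_iff_ne_zero.2 hτ⟩]

theorem unique (hx : IsBesselPath b α r x) (hy : IsBesselPath b α r y) : x = y := by
  funext t
  set Z : Set ℝ≥0 := {s | x s = 0 ∨ y s = 0}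
  by_cases htZ : t ∈ Z
  swap
  · obtain ⟨hxt, hyt⟩ := not_or.1 htZ
    exact hx.eq_of_ne_zero hy hxt hyt
  have hZ : IsClosed Z := (isClosed_eq hx.cont continuous_const).union
    (isClosed_eq hy.cont continuous_const)
  set τ := sInf Z
  have hτZ : τ ∈ Z := hZ.csInf_mem ⟨t, htZ⟩ (OrderBot.bddBelow Z)
  have hτt : τ ≤ t := csInf_le (OrderBot.bddBelow Z) htZ
  have hτ : x τ = y τ := hx.eq_of_eqOn_Iio hy fun s hs => by
    obtain ⟨hxs, hys⟩ := not_or.1 (notMem_of_lt_csInf' hs : s ∉ Z)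
    exact hx.eq_of_ne_zero hy hxs hys
  have hxτ : x τ = 0 := hτZ.elim id hτ.trans
  rw [hx.absorbed τ t hτt hxτ, hy.absorbed τ t hτt (hτ ▸ hxτ)]

end IsBesselPath

theorem statement7_general {Ω : Type*} {mΩ : MeasurableSpace Ω} {P : Measure Ω}
    {F : Filtration ℝ≥0 mΩ} {β : ℝ≥0 → Ω → ℝ} {α r : ℝ}
    {R₁ R₂ : ℝ≥0 → Ω → ℝ}
    (h₁ : IsBesselF P F β α r R₁) (h₂ : IsBesselF P F β α r R₂) :
    ∀ᵐ ω ∂P, ∀ t, R₁ t ω = R₂ t ω :=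
  ae_of_all P fun ω => congrFun ((h₁.isBesselPath ω).unique (h₂.isBesselPath ω))

/-- pathwise uniqueness for the absorbed Bessel SDE
`dR = dβ - (α/R) dt`: two solutions driven by the same `(F_t)`-Brownian motion `β`
and started from the same point `r` coincide almost surely. -/
theorem statement7 {Ω : Type*} {mΩ : MeasurableSpace Ω} {P : Measure Ω}
    {F : Filtration ℝ≥0 mΩ} {β : ℝ≥0 → Ω → ℝ} {α r : ℝ}
    (hα : 0 < α) (hr : 0 ≤ r)
    {R₁ R₂ : ℝ≥0 → Ω → ℝ}
    (h₁ : IsBesselF P F β α r R₁) (h₂ : IsBesselF P F β α r R₂) :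
    ∀ᵐ ω ∂P, ∀ t, R₁ t ω = R₂ t ω :=
  statement7_general h₁ h₂

end
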